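/- Let P ⊆ ℝ^n be a polytope with vertex set V, and let c, f ∈ ℝ^n. Let F = {x ∈ P : fᵀx = min_{y ∈ P} fᵀy} be the f-minimal face of P, and let v be a vertex of P that maximizes x ↦ cᵀx over F. Then there exists a c-monotone path from v to a vertex maximizing x ↦ cᵀx over P whose length is at most |{fᵀw : w ∈ V}| − 1, i.e., at most one less than the number of distinct values that fᵀ takes on the vertices of P. -/

import Mathlib

open Set Finset

/-- The standard dot product on `Fin n → ℝ`. -/
def dotp {n : ℕ} (c x : Fin n → ℝ) : ℝ := ∑ i, c i * x i

/-- A polytope is the convex hull of a finite nonempty set of points. -/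
def IsPolytope {n : ℕ} (P : Set (Fin n → ℝ)) : Prop :=
  ∃ S : Finset (Fin n → ℝ), S.Nonempty ∧ P = convexHull ℝ (S : Set (Fin n → ℝ))

/-- The dimension of a polytope: the dimension of its affine hull. -/
noncomputable def polytopeDim {n : ℕ} (P : Set (Fin n → ℝ)) : ℕ :=
  Module.finrank ℝ (affineSpan ℝ P).direction

/-- A vertex of a polytope is an extreme point. -/
def IsVertexOf {n : ℕ} (P : Set (Fin n → ℝ)) (v : Fin n → ℝ) : Prop :=
  v ∈ Set.extremePoints ℝ P

/-- An edge of a polytope: a segment between two distinct vertices that is an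
exposed face of `P`; its endpoints are then called neighbors. -/
def IsEdgeOf {n : ℕ} (P : Set (Fin n → ℝ)) (u v : Fin n → ℝ) : Prop :=
  u ≠ v ∧ IsVertexOf P u ∧ IsVertexOf P v ∧ IsExposed ℝ P (segment ℝ u v)

/-- A `c`-monotone path of length `m` in `P`: a sequence of `m+1` vertices of `P`
such that consecutive vertices form edges of `P` and the value of `cᵀx` strictly
increases along the path. -/
def IsMonotonePath {n : ℕ} (P : Set (Fin n → ℝ)) (c : Fin n → ℝ) (m : ℕ)
    (p : Fin (m + 1) → (Fin n → ℝ)) : Prop :=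
  (∀ i, IsVertexOf P (p i)) ∧
  ∀ i : Fin m, IsEdgeOf P (p i.castSucc) (p i.succ) ∧
    dotp c (p i.castSucc) < dotp c (p i.succ)

/-!
Follow the parametric ("shadow vertex") path. Every vertex `x` on it maximizes `c - t • f` over
the vertices for some `t ≥ 0`; at `v` this holds for all large `t`, because `v` is `c`-maximal
among the `f`-minimal vertices. Lowering `t` to the next breakpoint `μ`, the largest slope
`(c u - c x) / (f u - f x)` over vertices with `f u > f x`, yields a face on which `c - μ • f` is
constant and which contains a vertex better than `x` for `c`. That face has a `c`-improving edge at
`x`, and since `c - μ • f` is constant on it, `f` increases along the edge as well. So `f` strictly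
increases along the whole path, which therefore has at most as many vertices as `f` has values, and
the path only stops at a `c`-maximal vertex.

The improving edge is found by induction on the number of vertices of the face: tilting the
objective by a functional exposing `x` cuts out a smaller face that contains `x` and a better
vertex, until the face is an edge.
-/

open Filter Topology

noncomputable def argmaxSet {α : Type*} (V : Finset α) (l : α → ℝ) : Finset α :=
  V.filter fun u => ∀ w ∈ V, l w ≤ l u

section ArgmaxSet

variable {α : Type*} {V : Finset α} {l : α → ℝ} {x u : α}

@[simp]
lemma mem_argmaxSet : u ∈ argmaxSet V l ↔ u ∈ V ∧ ∀ w ∈ V, l w ≤ l u :=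
  mem_filter

lemma argmaxSet_subset : argmaxSet V l ⊆ V :=
  filter_subset _ _

lemma mem_argmaxSet_iff_eq (hx : x ∈ argmaxSet V l) :
    u ∈ argmaxSet V l ↔ u ∈ V ∧ l u = l x := by
  rw [mem_argmaxSet] at hx ⊢
  exact ⟨fun hu => ⟨hu.1, le_antisymm (hx.2 u hu.1) (hu.2 x hx.1)⟩,
    fun hu => ⟨hu.1, fun w hw => hu.2 ▸ hx.2 w hw⟩⟩

lemma exists_argmaxSet_argmaxSet_eq (V : Finset α) (h k : α → ℝ) :
    ∃ ε : ℝ, 0 < ε ∧ argmaxSet (argmaxSet V h) k = argmaxSet V (h + ε • k) := by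
  -- `ε` is small enough that adding `ε • k` never overturns a strict comparison of `h`-values
  have hsmall : ∀ᶠ ε in 𝓝 (0 : ℝ),
      ∀ u ∈ V, ∀ w ∈ V, h u < h w → ε * (k u - k w) < h w - h u := by
    simp only [eventually_all_finset]
    intro u _ w _
    by_cases huw : h u < h w
    · filter_upwards [((continuous_mul_const (k u - k w)).tendsto' 0 0 (zero_mul _)).eventually
        (gt_mem_nhds (sub_pos.2 huw))] with ε hε using fun _ => hε
    · exact Eventually.of_forall fun _ h' => absurd h' huw
  obtain ⟨ε, hε, hεpos : 0 < ε⟩ :=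
    ((hsmall.filter_mono (nhdsWithin_le_nhds (s := Ioi 0))).and self_mem_nhdsWithin).exists
  refine ⟨ε, hεpos, ext fun u => ?_⟩
  simp only [mem_argmaxSet, Pi.add_apply, Pi.smul_apply, smul_eq_mul]
  constructor
  · rintro ⟨⟨huV, hhu⟩, hku⟩
    refine ⟨huV, fun w hw => ?_⟩
    rcases (hhu w hw).lt_or_eq with hlt | heq
    · linarith [hε w hw u huV hlt]
    · have := hku w ⟨hw, fun z hz => heq ▸ hhu z hz⟩
      nlinarith
  · rintro ⟨huV, hu⟩
    have hhu : ∀ w ∈ V, h w ≤ h u := fun w hw =>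
      not_lt.1 fun hlt => by linarith [hε u huV w hw hlt, hu w hw]
    refine ⟨⟨huV, hhu⟩, fun w ⟨hw, hhw⟩ => ?_⟩
    have := hu w hw
    have : h w = h u := le_antisymm (hhu w hw) (hhw u huV)
    nlinarith

lemma exists_max_ratio {ι : Type*} {s : Finset ι} (hs : s.Nonempty) (a b : ι → ℝ)
    (hb : ∀ i ∈ s, 0 < b i) : ∃ μ : ℝ, (∀ i ∈ s, a i ≤ μ * b i) ∧ ∃ i ∈ s, a i = μ * b i := by
  obtain ⟨i₀, hi₀, hmax⟩ := s.exists_max_image (fun i => a i / b i) hs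
  refine ⟨a i₀ / b i₀, fun i hi => ?_, i₀, hi₀, (div_mul_cancel₀ _ (hb i₀ hi₀).ne').symm⟩
  exact (div_le_iff₀ (hb i hi)).1 (hmax i hi)

lemma exists_mem_argmaxSet_add_smul {U : Finset α} (hx : x ∈ U) {d : α → ℝ}
    (hd : ∀ w ∈ U, w ≠ x → d w < d x) (hu : u ∈ U) (hux : u ≠ x) (e : α → ℝ) :
    ∃ μ : ℝ, x ∈ argmaxSet U (e + μ • d) ∧ ∃ w ∈ argmaxSet U (e + μ • d), w ≠ x := by
  classical
  obtain ⟨μ, hle, w, hw, heq⟩ := exists_max_ratio (s := U.erase x) ⟨u, mem_erase.2 ⟨hux, hu⟩⟩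
    (fun w => e w - e x) (fun w => d x - d w)
    fun w hw => sub_pos.2 (hd w (mem_erase.1 hw).2 (mem_erase.1 hw).1)
  have hxμ : x ∈ argmaxSet U (e + μ • d) := by
    refine mem_argmaxSet.2 ⟨hx, fun z hz => ?_⟩
    rcases eq_or_ne z x with rfl | hzx
    · exact le_rfl
    · simp only [Pi.add_apply, Pi.smul_apply, smul_eq_mul]
      linarith [hle z (mem_erase.2 ⟨hzx, hz⟩)]
  refine ⟨μ, hxμ, w, (mem_argmaxSet_iff_eq hxμ).2 ⟨(mem_erase.1 hw).2, ?_⟩, (mem_erase.1 hw).1⟩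
  simp only [Pi.add_apply, Pi.smul_apply, smul_eq_mul]
  linarith

lemma exists_nonneg_mem_argmaxSet_sub_smul {c f : α → ℝ} (hx : x ∈ V)
    (hmin : ∀ u ∈ V, f x ≤ f u) (htie : ∀ u ∈ V, f u = f x → c u ≤ c x) :
    ∃ t : ℝ, 0 ≤ t ∧ x ∈ argmaxSet V (c - t • f) := by
  obtain ⟨μ, hμ⟩ : ∃ μ : ℝ, ∀ u ∈ V, f x < f u → c u - c x ≤ μ * (f u - f x) := by
    rcases (V.filter fun u => f x < f u).eq_empty_or_nonempty with hT | hT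
    · exact ⟨0, fun u hu hlt => absurd hlt (filter_eq_empty_iff.1 hT hu)⟩
    · obtain ⟨μ, hμ, -⟩ := exists_max_ratio hT (fun u => c u - c x) (fun u => f u - f x)
        fun u hu => sub_pos.2 (mem_filter.1 hu).2
      exact ⟨μ, fun u hu hlt => hμ u (mem_filter.2 ⟨hu, hlt⟩)⟩
  refine ⟨max μ 0, le_max_right _ _, mem_argmaxSet.2 ⟨hx, fun u hu => ?_⟩⟩
  simp only [Pi.sub_apply, Pi.smul_apply, smul_eq_mul]
  rcases (hmin u hu).lt_or_eq with hlt | heq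
  · nlinarith [hμ u hu hlt, mul_le_mul_of_nonneg_right (le_max_left μ 0) (sub_pos.2 hlt).le]
  · rw [← heq]
    linarith [htie u hu heq.symm]

lemma exists_breakpoint {c f : α → ℝ} {t : ℝ} (ht : 0 ≤ t) (hx : x ∈ argmaxSet V (c - t • f))
    (hu : u ∈ V) (hcu : c x < c u) :
    ∃ μ : ℝ, 0 < μ ∧ x ∈ argmaxSet V (c - μ • f) ∧ ∃ w ∈ argmaxSet V (c - μ • f), c x < c w := by
  simp only [mem_argmaxSet, Pi.sub_apply, Pi.smul_apply, smul_eq_mul] at hx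
  obtain ⟨hxV, hxmax⟩ := hx
  have hf_lt : ∀ w ∈ V, c x < c w → f x < f w := fun w hw hcw => by
    by_contra! hfw
    nlinarith [hxmax w hw, mul_le_mul_of_nonneg_left (sub_nonneg.2 hfw) ht]
  obtain ⟨μ, hle, w, hw, heq⟩ := exists_max_ratio (s := V.filter fun w => f x < f w)
    ⟨u, mem_filter.2 ⟨hu, hf_lt u hu hcu⟩⟩ (fun w => c w - c x) (fun w => f w - f x)
    fun w hw => sub_pos.2 (mem_filter.1 hw).2
  obtain ⟨hwV, hfw⟩ := mem_filter.1 hw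
  have hμ : 0 < μ := by
    have := hle u (mem_filter.2 ⟨hu, hf_lt u hu hcu⟩)
    nlinarith [hf_lt u hu hcu]
  have hμt : μ ≤ t := le_of_mul_le_mul_right (by nlinarith [hxmax w hwV]) (sub_pos.2 hfw)
  have hxμ : x ∈ argmaxSet V (c - μ • f) := by
    refine mem_argmaxSet.2 ⟨hxV, fun z hz => ?_⟩
    simp only [Pi.sub_apply, Pi.smul_apply, smul_eq_mul]
    by_cases hfz : f x < f z
    · linarith [hle z (mem_filter.2 ⟨hz, hfz⟩)]
    · nlinarith [hxmax z hz, mul_le_mul_of_nonneg_right hμt (sub_nonneg.2 (not_lt.1 hfz))]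
  refine ⟨μ, hμ, hxμ, w, (mem_argmaxSet_iff_eq hxμ).2 ⟨hwV, ?_⟩, ?_⟩
  · simp only [Pi.sub_apply, Pi.smul_apply, smul_eq_mul]
    linarith
  · nlinarith

end ArgmaxSet

lemma card_filter_lt_lt {β : Type*} [LinearOrder β] {s : Finset β} {a b : β} (hb : b ∈ s)
    (hab : a < b) : (s.filter (b < ·)).card < (s.filter (a < ·)).card :=
  card_lt_card <| (Finset.ssubset_iff_of_subset fun _ ht => mem_filter.2
    ⟨(mem_filter.1 ht).1, hab.trans (mem_filter.1 ht).2⟩).2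
    ⟨b, mem_filter.2 ⟨hb, hab⟩, fun h => lt_irrefl b (mem_filter.1 h).2⟩

theorem exists_path_of_step {α : Type*} (I Stop : α → Prop) (R : α → α → Prop) (φ : α → ℕ)
    (step : ∀ x, I x → ¬ Stop x → ∃ y, I y ∧ R x y ∧ φ y < φ x) {x : α} (hx : I x) :
    ∃ (m : ℕ) (p : Fin (m + 1) → α), m ≤ φ x ∧ p 0 = x ∧ (∀ i, I (p i)) ∧
      (∀ i : Fin m, R (p i.castSucc) (p i.succ)) ∧ Stop (p (Fin.last m)) := by
  induction hk : φ x using Nat.strong_induction_on generalizing x with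
  | _ k ih =>
  by_cases hstop : Stop x
  · exact ⟨0, fun _ => x, Nat.zero_le _, rfl, fun _ => hx, fun i => i.elim0, hstop⟩
  obtain ⟨y, hy, hxy, hφ⟩ := step x hx hstop
  obtain ⟨m, p, hm, hp0, hpI, hpR, hpStop⟩ := ih _ (hk ▸ hφ) hy rfl
  refine ⟨m + 1, Fin.cons x p, by omega, rfl, Fin.cases hx hpI, fun i => ?_,
    by simpa [← Fin.succ_last] using hpStop⟩
  exact Fin.cases (by simpa [hp0] using hxy) (fun j => by simpa [← Fin.succ_castSucc] using hpR j) i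

section Polytope

variable {E : Type*} [NormedAddCommGroup E] [NormedSpace ℝ E] {V U : Finset E} {x y u : E}

lemma le_of_mem_convexHull (l : E →L[ℝ] ℝ) {s : Set E} {M : ℝ} (hs : ∀ w ∈ s, l w ≤ M)
    (hx : x ∈ convexHull ℝ s) : l x ≤ M :=
  convexHull_min hs (convex_halfSpace_le l.toLinearMap.isLinear M) hx

lemma toExposed_convexHull (V : Finset E) (l : E →L[ℝ] ℝ) :
    l.toExposed (convexHull ℝ ↑V) = convexHull ℝ ↑(argmaxSet V l) := by
  have hB : IsExposed ℝ (convexHull ℝ ↑V) (l.toExposed (convexHull ℝ ↑V)) :=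
    ContinuousLinearMap.toExposed.isExposed
  have hconv := hB.convex (convex_convexHull ℝ _)
  refine Subset.antisymm ?_ (convexHull_min (fun u hu => ⟨subset_convexHull ℝ _
    (argmaxSet_subset hu), fun _ hy => le_of_mem_convexHull l (mem_argmaxSet.1 hu).2 hy⟩) hconv)
  rw [← closure_convexHull_extremePoints (hB.isCompact (V.finite_toSet.isCompact_convexHull ℝ))
    hconv]
  refine closure_minimal (convexHull_mono fun z hz => ?_)
    ((argmaxSet V l).finite_toSet.isClosed_convexHull (𝕜 := ℝ))
  rw [hB.isExtreme.extremePoints_eq] at hz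
  exact mem_argmaxSet.2 ⟨extremePoints_convexHull_subset hz.2,
    fun w hw => hz.1.2 w (subset_convexHull ℝ _ hw)⟩

lemma exists_forall_lt_of_mem_extremePoints (hx : x ∈ (convexHull ℝ (V : Set E)).extremePoints ℝ) :
    ∃ d : E →L[ℝ] ℝ, ∀ u ∈ V, u ≠ x → d u < d x := by
  classical
  have hx' : x ∉ convexHull ℝ ↑(V.erase x) := fun hmem => by
    simpa using extremePoints_convexHull_subset (inter_extremePoints_subset_extremePoints_of_subset
      (convexHull_mono (coe_subset.2 (erase_subset x V))) ⟨hmem, hx⟩)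
  obtain ⟨d, r, hlt, hr⟩ := geometric_hahn_banach_closed_point (convex_convexHull ℝ _)
    ((V.erase x).finite_toSet.isClosed_convexHull (𝕜 := ℝ)) hx'
  exact ⟨d, fun u hu hux => (hlt u (subset_convexHull ℝ _ (mem_erase.2 ⟨hux, hu⟩))).trans hr⟩

lemma mem_openSegment_of_smul_sub_eq {w w' : E} {a b : ℝ} (ha : 0 < a) (hab : a < b)
    (h : b • (w - x) = a • (w' - x)) : w ∈ openSegment ℝ w' x := by
  have hb : 0 < b := ha.trans hab
  rw [openSegment_symm, openSegment_eq_image']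
  refine ⟨a / b, ⟨div_pos ha hb, (div_lt_one hb).2 hab⟩, ?_⟩
  change x + (a / b) • (w' - x) = w
  rw [div_eq_inv_mul, mul_smul, ← h, smul_smul, inv_mul_cancel₀ hb.ne', one_smul, add_sub_cancel]

lemma smul_sub_ne_smul_sub {A : Set E} {w w' : E} (hx : x ∈ A) (hw : w ∈ A.extremePoints ℝ)
    (hw' : w' ∈ A.extremePoints ℝ) (hne : w ≠ w') {a b : ℝ} (ha : 0 < a) (hb : 0 < b) :
    b • (w - x) ≠ a • (w' - x) := by
  intro h
  rcases lt_trichotomy a b with hab | rfl | hab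
  · exact hne (hw.2 hw'.1 hx (mem_openSegment_of_smul_sub_eq ha hab h)).symm
  · exact hne (sub_left_injective (smul_right_injective E ha.ne' h))
  · exact hne (hw'.2 hw.1 hx (mem_openSegment_of_smul_sub_eq hb hab h.symm))

lemma exists_argmaxSet_add_smul_ne (hV : (V : Set E) ⊆ (convexHull ℝ (V : Set E)).extremePoints ℝ)
    (hUV : U ⊆ V) (hx : x ∈ U) {d : E →L[ℝ] ℝ} (hd : ∀ w ∈ U, w ≠ x → d w < d x)
    (hcard : 2 < U.card) :
    ∃ (e : E →L[ℝ] ℝ) (ν : ℝ), x ∈ argmaxSet U ⇑(e + ν • d) ∧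
      (∃ w ∈ argmaxSet U ⇑(e + ν • d), w ≠ x) ∧ argmaxSet U ⇑(e + ν • d) ≠ U := by
  classical
  obtain ⟨w, hw, w', hw', hww'⟩ :=
    one_lt_card.1 (by rw [card_erase_of_mem hx]; omega : 1 < (U.erase x).card)
  obtain ⟨hwx, hwU⟩ := mem_erase.1 hw
  obtain ⟨hw'x, hw'U⟩ := mem_erase.1 hw'
  have hz : (d x - d w') • (w - x) - (d x - d w) • (w' - x) ≠ 0 :=
    sub_ne_zero.2 (smul_sub_ne_smul_sub (subset_convexHull ℝ _ (hUV hx)) (hV (hUV hwU))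
      (hV (hUV hw'U)) hww' (sub_pos.2 (hd w hwU hwx)) (sub_pos.2 (hd w' hw'U hw'x)))
  obtain ⟨e, he⟩ := SeparatingDual.exists_ne_zero (R := ℝ) hz
  obtain ⟨ν, hxν, hw₀⟩ := exists_mem_argmaxSet_add_smul hx hd hwU hwx e
  refine ⟨e, ν, hxν, hw₀, fun hall => he ?_⟩
  -- if both `w` and `w'` tie with `x`, then `e` vanishes on the vector above
  have htie : ∀ z ∈ U, e z + ν * d z = e x + ν * d x := fun z hz => by
    simpa using ((mem_argmaxSet_iff_eq hxν).1 (hall.symm ▸ hz)).2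
  simp only [map_sub, map_smul, smul_eq_mul]
  linear_combination (d x - d w') * htie w hwU - (d x - d w) * htie w' hw'U

def IsFaceVertices (V U : Finset E) : Prop :=
  ∃ l : E →L[ℝ] ℝ, U = argmaxSet V l

lemma isFaceVertices_argmaxSet (hU : IsFaceVertices V U) (k : E →L[ℝ] ℝ) :
    IsFaceVertices V (argmaxSet U k) := by
  obtain ⟨h, rfl⟩ := hU
  obtain ⟨ε, -, hε⟩ := exists_argmaxSet_argmaxSet_eq V h k
  exact ⟨h + ε • k, hε⟩

namespace IsFaceVertices

lemma subset (hU : IsFaceVertices V U) : U ⊆ V := by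
  obtain ⟨l, rfl⟩ := hU
  exact argmaxSet_subset

lemma isExposed_segment (hU : IsFaceVertices V U) (hxy : (U : Set E) = {x, y}) :
    IsExposed ℝ (convexHull ℝ ↑V) (segment ℝ x y) := by
  obtain ⟨l, rfl⟩ := hU
  rw [← convexHull_pair, ← hxy, ← toExposed_convexHull]
  exact ContinuousLinearMap.toExposed.isExposed

lemma exists_ssubset (hV : (V : Set E) ⊆ (convexHull ℝ (V : Set E)).extremePoints ℝ)
    (hU : IsFaceVertices V U) (hx : x ∈ U) (g : E →L[ℝ] ℝ) (hu : u ∈ U) (hgu : g x < g u)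
    (hcard : 2 < U.card) : ∃ U' ⊂ U, IsFaceVertices V U' ∧ x ∈ U' ∧ ∃ u' ∈ U', g x < g u' := by
  obtain ⟨d, hd⟩ := exists_forall_lt_of_mem_extremePoints (hV (hU.subset hx))
  have hdU : ∀ w ∈ U, w ≠ x → d w < d x := fun w hw => hd w (hU.subset hw)
  have hux : u ≠ x := by rintro rfl; exact lt_irrefl _ hgu
  obtain ⟨μ, hxμ, w₀, hw₀, hw₀x⟩ := exists_mem_argmaxSet_add_smul hx hdU hu hux g
  have hμ : 0 < μ := by
    have := (mem_argmaxSet.1 hxμ).2 u hu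
    simp only [Pi.add_apply, Pi.smul_apply, smul_eq_mul] at this
    nlinarith [hdU u hu hux]
  have himp : ∀ w ∈ argmaxSet U ⇑(g + μ • d), w ≠ x → g x < g w := fun w hw hwx => by
    obtain ⟨hwU, htie⟩ := (mem_argmaxSet_iff_eq hxμ).1 hw
    simp only [Pi.add_apply, Pi.smul_apply, smul_eq_mul] at htie
    nlinarith [hdU w hwU hwx]
  by_cases hall : argmaxSet U ⇑(g + μ • d) = U
  · obtain ⟨e, ν, hxν, ⟨w, hw, hwx⟩, hne⟩ := exists_argmaxSet_add_smul_ne hV hU.subset hx hdU hcard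
    exact ⟨_, ssubset_of_subset_of_ne argmaxSet_subset hne, isFaceVertices_argmaxSet hU _, hxν,
      w, hw, himp w (hall.symm ▸ argmaxSet_subset hw) hwx⟩
  · exact ⟨_, ssubset_of_subset_of_ne argmaxSet_subset hall, isFaceVertices_argmaxSet hU _, hxμ,
      w₀, hw₀, himp w₀ hw₀ hw₀x⟩

theorem exists_improving_edge (hV : (V : Set E) ⊆ (convexHull ℝ (V : Set E)).extremePoints ℝ)
    (hU : IsFaceVertices V U) (hx : x ∈ U) (g : E →L[ℝ] ℝ) (hu : u ∈ U) (hgu : g x < g u) :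
    ∃ y ∈ U, g x < g y ∧ IsExposed ℝ (convexHull ℝ ↑V) (segment ℝ x y) := by
  induction hk : U.card using Nat.strong_induction_on generalizing U u with
  | _ k ih =>
  rcases le_or_gt U.card 2 with hcard | hcard
  · classical
    have hux : u ≠ x := by rintro rfl; exact lt_irrefl _ hgu
    have hUxu : U = {x, u} := (eq_of_subset_of_card_le
      (insert_subset hx (singleton_subset_iff.2 hu)) (by rw [card_pair hux.symm]; omega)).symm
    exact ⟨u, hu, hgu, hU.isExposed_segment (by rw [hUxu, coe_pair])⟩
  · obtain ⟨U', hU'U, hU', hxU', u', hu', hgu'⟩ := hU.exists_ssubset hV hx g hu hgu hcard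
    obtain ⟨y, hy, hgy, hexp⟩ := ih _ (hk ▸ card_lt_card hU'U) hU' hxU' hu' hgu' rfl
    exact ⟨y, hU'U.subset hy, hgy, hexp⟩

end IsFaceVertices

theorem exists_coherent_step (hV : (V : Set E) ⊆ (convexHull ℝ (V : Set E)).extremePoints ℝ)
    (c f : E →L[ℝ] ℝ) {t : ℝ} (ht : 0 ≤ t) (hx : x ∈ argmaxSet V ⇑(c - t • f)) (hu : u ∈ V)
    (hcu : c x < c u) : ∃ y, (∃ μ : ℝ, 0 ≤ μ ∧ y ∈ argmaxSet V ⇑(c - μ • f)) ∧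
      IsExposed ℝ (convexHull ℝ ↑V) (segment ℝ x y) ∧ c x < c y ∧ f x < f y := by
  obtain ⟨μ, hμ, hxμ, w, hw, hcw⟩ := exists_breakpoint (c := ⇑c) (f := ⇑f) ht hx hu hcu
  obtain ⟨y, hy, hcy, hexp⟩ :=
    IsFaceVertices.exists_improving_edge hV ⟨c - μ • f, rfl⟩ hxμ c hw hcw
  refine ⟨y, ⟨μ, hμ.le, hy⟩, hexp, hcy, ?_⟩
  have htie := ((mem_argmaxSet_iff_eq hxμ).1 hy).2
  simp only [Pi.sub_apply, Pi.smul_apply, smul_eq_mul] at htie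
  nlinarith

theorem exists_coherent_path (hV : (V : Set E) ⊆ (convexHull ℝ (V : Set E)).extremePoints ℝ)
    (c f : E →L[ℝ] ℝ) {t : ℝ} (ht : 0 ≤ t) (hx : x ∈ argmaxSet V ⇑(c - t • f)) :
    ∃ (m : ℕ) (p : Fin (m + 1) → E), m ≤ ((V.image f).filter (f x < ·)).card ∧ p 0 = x ∧
      (∀ i, p i ∈ V) ∧
      (∀ i : Fin m, p i.castSucc ≠ p i.succ ∧
        IsExposed ℝ (convexHull ℝ ↑V) (segment ℝ (p i.castSucc) (p i.succ)) ∧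
        c (p i.castSucc) < c (p i.succ)) ∧
      ∀ u ∈ V, c u ≤ c (p (Fin.last m)) := by
  obtain ⟨m, p, hm, hp0, hpI, hpR, hpStop⟩ := exists_path_of_step
    (fun y => ∃ s : ℝ, 0 ≤ s ∧ y ∈ argmaxSet V ⇑(c - s • f)) (fun y => ∀ u ∈ V, c u ≤ c y)
    (fun y z => y ≠ z ∧ IsExposed ℝ (convexHull ℝ ↑V) (segment ℝ y z) ∧ c y < c z)
    (fun y => ((V.image f).filter (f y < ·)).card)
    (fun y ⟨s, hs, hy⟩ hstop => by
      obtain ⟨u, hu, hcu⟩ : ∃ u ∈ V, c y < c u := by simpa using hstop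
      obtain ⟨z, ⟨μ, hμ, hz⟩, hexp, hcz, hfz⟩ := exists_coherent_step hV c f hs hy hu hcu
      exact ⟨z, ⟨μ, hμ, hz⟩, ⟨ne_of_apply_ne c hcz.ne, hexp, hcz⟩,
        card_filter_lt_lt (mem_image_of_mem f (argmaxSet_subset hz)) hfz⟩)
    ⟨t, ht, hx⟩
  refine ⟨m, p, hm, hp0, fun i => ?_, hpR, hpStop⟩
  obtain ⟨_, _, hpi⟩ := hpI i
  exact argmaxSet_subset hpi

lemma Set.Finite.exists_finset_extremePoints {s : Set E} (hs : s.Finite) :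
    ∃ V : Finset E, (V : Set E) = (convexHull ℝ s).extremePoints ℝ ∧
      convexHull ℝ (V : Set E) = convexHull ℝ s := by
  have hfin := hs.subset (extremePoints_convexHull_subset (𝕜 := ℝ))
  refine ⟨hfin.toFinset, hfin.coe_toFinset, ?_⟩
  rw [hfin.coe_toFinset, ← (hfin.isClosed_convexHull (𝕜 := ℝ)).closure_eq]
  exact closure_convexHull_extremePoints (hs.isCompact_convexHull ℝ) (convex_convexHull ℝ s)

end Polytope

noncomputable def dotpCLM {n : ℕ} (c : Fin n → ℝ) : (Fin n → ℝ) →L[ℝ] ℝ :=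
  LinearMap.toContinuousLinearMap (dotProductBilin ℝ ℝ c)

/-- **Corollary 1 of \[01simplex\] (length bound for coherent monotone paths).**
Let `P ⊆ ℝ^n` be a polytope with vertex set `V`, and `c, f ∈ ℝ^n`. Let `F` be the
`f`-minimal face of `P` and `v` a vertex of `P` maximizing `cᵀx` over `F`. Then
there is a `c`-monotone path from `v` to a vertex maximizing `cᵀx` over `P` whose
length is at most `|{fᵀw : w ∈ V}| − 1`. -/
theorem coherent_path_length_bound {n : ℕ} (P : Set (Fin n → ℝ))
    (hP : IsPolytope P) (c f : Fin n → ℝ)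
    (F : Set (Fin n → ℝ))
    (hF : F = {x ∈ P | ∀ y ∈ P, dotp f x ≤ dotp f y})
    (v : Fin n → ℝ) (hv : IsVertexOf P v) (hvF : v ∈ F)
    (hvmax : ∀ x ∈ F, dotp c x ≤ dotp c v) :
    ∃ (m : ℕ) (p : Fin (m + 1) → (Fin n → ℝ)),
      m + 1 ≤ ((fun w => dotp f w) '' (Set.extremePoints ℝ P)).ncard ∧
      IsMonotonePath P c m p ∧
      p 0 = v ∧
      (∀ x ∈ P, dotp c x ≤ dotp c (p (Fin.last m))) := by
  obtain ⟨S, -, rfl⟩ := hP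
  subst hF
  obtain ⟨V, hVext, hVS⟩ := S.finite_toSet.exists_finset_extremePoints
  have hvV : v ∈ V := by rw [← mem_coe, hVext]; exact hv
  have hvertex : ∀ u ∈ V, IsVertexOf (convexHull ℝ ↑S) u := fun u hu => by
    rw [IsVertexOf, ← hVext]; exact hu
  have hVP : ∀ u ∈ V, u ∈ convexHull ℝ ↑S := fun u hu => extremePoints_subset (hvertex u hu)
  obtain ⟨t, ht, hvt⟩ := exists_nonneg_mem_argmaxSet_sub_smul (c := dotp c) (f := dotp f) hvV
    (fun u hu => hvF.2 u (hVP u hu)) fun u hu hfu => hvmax u ⟨hVP u hu, hfu ▸ hvF.2⟩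
  obtain ⟨m, p, hm, hp0, hpV, hpR, hpmax⟩ :=
    exists_coherent_path (by rw [hVS, hVext]) (dotpCLM c) (dotpCLM f) ht hvt
  have hpath : IsMonotonePath (convexHull ℝ ↑S) c m p :=
    ⟨fun i => hvertex _ (hpV i), fun i => ⟨⟨(hpR i).1, hvertex _ (hpV _), hvertex _ (hpV _),
      hVS ▸ (hpR i).2.1⟩, (hpR i).2.2⟩⟩
  have hlen : m < (V.image (dotp f)).card := hm.trans_lt (card_lt_card (filter_ssubset.2
    ⟨dotp f v, mem_image_of_mem _ hvV, lt_irrefl _⟩))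
  refine ⟨m, p, ?_, hpath, hp0, fun x hx => le_of_mem_convexHull (dotpCLM c) hpmax (hVS ▸ hx)⟩
  rw [← hVext, ← coe_image, ncard_coe_finset]
  exact hlen
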